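/- arXiv:math/0003076 — 2 statements merged into one kernel-verified Lean document; each statement's English description precedes it below -/
import Mathlib

section
/- Let a,b,c,p be positive integers with a|b, c|b, p|(b/a+1), p|(b/c+1), D=b²−ac>0, let r ∈ ℤ, let s be an integer with s ≡ b/a+1 (mod 2), put Λ={(m,n)∈ℤ²: n≡(b/c+1)m (mod 2)} and 𝐜=(r/p+acs/(2D),1/2), and let ε = (b+√D)/(b−√D) ∈ ℝ. Then ε is a totally positive unit of norm 1 in ℚ(√D) (both ε and (b−√D)/(b+√D) are positive, and ε·(b−√D)/(b+√D)=1), and multiplication by ε preserves the coset Λ+𝐜: the map T(m,n) = ( ((b²+D)m + 2bcn)/(ac), ((b²+D)n + 2b(D/c)m)/(ac) ), which satisfies cT(m,n)₂ + T(m,n)₁√D = ε·(cn+m√D), is a bijection of Λ+𝐜 onto itself, and it preserves the quadratic form Q(m,n) = 2cn² − (2D/c)m². -/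
/-- The coset `Λ + 𝐜 ⊆ ℚ²` where `Λ = {(m,n) ∈ ℤ² : n ≡ (b/c+1)m mod 2}`, `𝐜 = (c₁,1/2)`. -/
def cosetL (b c : ℤ) (c₁ : ℚ) : Set (ℚ × ℚ) :=
  {v | ∃ m n : ℤ, (2 : ℤ) ∣ (n - (b / c + 1) * m) ∧ v = ((m : ℚ) + c₁, (n : ℚ) + 1 / 2)}

/-- The quadratic form `Q(m,n) = 2cn² - (2D/c)m²`, `D = b² - ac`. -/
def Qform (a b c : ℤ) (v : ℚ × ℚ) : ℚ :=
  2 * (c : ℚ) * v.2 ^ 2 - 2 * ((b : ℚ) ^ 2 - (a : ℚ) * (c : ℚ)) / (c : ℚ) * v.1 ^ 2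

/-- Multiplication by `ε = (b+√D)/(b-√D)` in the coordinates `(m,n) ↦ cn + m√D`:
`T(m,n) = (((b²+D)m + 2bcn)/(ac), ((b²+D)n + 2b(D/c)m)/(ac))`. -/
def Teps (a b c : ℤ) (v : ℚ × ℚ) : ℚ × ℚ :=
  ((((b : ℚ) ^ 2 + ((b : ℚ) ^ 2 - (a : ℚ) * (c : ℚ))) * v.1 + 2 * (b : ℚ) * (c : ℚ) * v.2) /
      ((a : ℚ) * (c : ℚ)),
    (((b : ℚ) ^ 2 + ((b : ℚ) ^ 2 - (a : ℚ) * (c : ℚ))) * v.2 +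
        2 * (b : ℚ) * (((b : ℚ) ^ 2 - (a : ℚ) * (c : ℚ)) / (c : ℚ)) * v.1) /
      ((a : ℚ) * (c : ℚ)))

/-
Write `b = a j = c k`. Then `D = ac(jk - 1)` and `ε = (b + √D)² / (ac)`, so in the coordinates
`(m, n) ↦ cn + m√D` multiplication by `ε` is the integral matrix
`[[2jk - 1, 2j], [2k(jk - 1), 2jk - 1]]` of determinant `1`, whose inverse is the same matrix
with `(j, k)` replaced by `(-j, -k)`. Both matrices move the translate `𝐜` of `Λ` by an integer
vector of the right parity, because `p ∣ jk - 1` makes `2(jk - 1)c₁ = 2(jk - 1)r/p + s` an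
integer congruent to `j + 1` mod `2`.
-/

open Set

def epsMap (j k : ℤ) (v : ℚ × ℚ) : ℚ × ℚ :=
  ((2 * j * k - 1) * v.1 + 2 * j * v.2, 2 * k * (j * k - 1) * v.1 + (2 * j * k - 1) * v.2)

theorem epsMap_neg_epsMap (j k : ℤ) (v : ℚ × ℚ) : epsMap (-j) (-k) (epsMap j k v) = v := by
  ext <;> simp only [epsMap, Int.cast_neg] <;> ring

theorem Teps_eq_epsMap {a b c j k : ℤ} (ha : a ≠ 0) (hc : c ≠ 0) (hj : b = a * j)
    (hk : b = c * k) : Teps a b c = epsMap j k := by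
  have hjQ : (b : ℚ) = a * j := by exact_mod_cast hj
  have hkQ : (b : ℚ) = c * k := by exact_mod_cast hk
  have hb2 : (b : ℚ) ^ 2 = a * c * (j * k) := by linear_combination (b : ℚ) * hkQ + c * k * hjQ
  have haQ : (a : ℚ) ≠ 0 := by exact_mod_cast ha
  have hcQ : (c : ℚ) ≠ 0 := by exact_mod_cast hc
  funext v
  ext <;> simp only [Teps, epsMap] <;> field_simp
  · linear_combination 2 * v.1 * hb2 + 2 * v.2 * (c : ℚ) * hjQ
  · linear_combination (2 * v.2 * (c : ℚ) + 2 * v.1 * b) * hb2 +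
      (2 * v.1 * (a : ℚ) * c * (j * k) - 2 * v.1 * a * c) * hkQ

theorem epsMap_mapsTo_cosetL {b c j k N : ℤ} {c₁ : ℚ} (hk : 2 ∣ b / c - k)
    (hN : 2 * ((j : ℚ) * k - 1) * c₁ = N) (hNj : 2 ∣ N - (j + 1)) :
    MapsTo (epsMap j k) (cosetL b c c₁) (cosetL b c c₁) := by
  rintro _ ⟨m, n, hmn, rfl⟩
  refine ⟨(2 * j * k - 1) * m + 2 * j * n + (N + j),
    2 * k * (j * k - 1) * m + (2 * j * k - 1) * n + (j * k - 1 + k * N), ?_, ?_⟩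
  · have hpar : 2 * k * (j * k - 1) * m + (2 * j * k - 1) * n + (j * k - 1 + k * N)
        - (b / c + 1) * ((2 * j * k - 1) * m + 2 * j * n + (N + j))
        = -(n - (b / c + 1) * m) - (N - (j + 1))
          - (b / c - k) * (2 * j * k * m + 2 * j * n + N + j)
          + 2 * (-(j * n) - j * k * m - k * m - j - 1) := by ring
    rw [hpar]
    exact dvd_add (dvd_sub (dvd_sub (dvd_neg.mpr hmn) hNj) (hk.mul_right _)) (dvd_mul_right 2 _)
  · ext <;> simp only [epsMap] <;> push_cast
    · linear_combination hN
    · linear_combination (k : ℚ) * hN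

theorem epsMap_bijOn_cosetL {b c j k N : ℤ} {c₁ : ℚ} (hk : b / c = k)
    (hN : 2 * ((j : ℚ) * k - 1) * c₁ = N) (hNj : 2 ∣ N - (j + 1)) :
    BijOn (epsMap j k) (cosetL b c c₁) (cosetL b c c₁) := by
  have hinv : MapsTo (epsMap (-j) (-k)) (cosetL b c c₁) (cosetL b c c₁) := by
    refine epsMap_mapsTo_cosetL (N := N) ⟨k, by rw [hk]; ring⟩ ?_ ?_
    · push_cast; linear_combination hN
    · obtain ⟨u, hu⟩ := hNj
      exact ⟨u + j, by linarith⟩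
  refine InvOn.bijOn ⟨fun v _ => ?_, fun v _ => ?_⟩
    (epsMap_mapsTo_cosetL ⟨0, by rw [hk]; ring⟩ hN hNj) hinv
  · exact epsMap_neg_epsMap j k v
  · simpa using epsMap_neg_epsMap (-j) (-k) v

theorem two_mul_sub_one_mul_shift_eq {a b c j k p t : ℤ} (r s : ℤ) (hp : p ≠ 0)
    (hD : b ^ 2 - a * c ≠ 0) (hb : b ^ 2 = a * c * (j * k)) (ht : j * k - 1 = p * t) :
    2 * ((j : ℚ) * k - 1) * ((r : ℚ) / p + (a : ℚ) * c * s / (2 * ((b : ℚ) ^ 2 - a * c)))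
      = (2 * t * r + s : ℤ) := by
  have hDQ : (b : ℚ) ^ 2 - a * c = a * c * (j * k - 1) := by
    have : (b : ℚ) ^ 2 = a * c * (j * k) := by exact_mod_cast hb
    linear_combination this
  have hjk : (j : ℚ) * k - 1 = p * t := by exact_mod_cast ht
  have hpQ : (p : ℚ) ≠ 0 := by exact_mod_cast hp
  have hac : (a : ℚ) * c * (j * k - 1) ≠ 0 := by rw [← hDQ]; exact_mod_cast hD
  have hshift :
      2 * ((j : ℚ) * k - 1) * ((a : ℚ) * c * s / (2 * (a * c * (j * k - 1)))) = s := by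
    field_simp
    exact mul_div_cancel_left₀ _ (by contrapose! hac; linear_combination hac)
  rw [hDQ, mul_add, hshift, hjk]
  field_simp
  push_cast
  ring

theorem Teps_embed_eq_mul {a b c : ℤ} (ha : a ≠ 0) (hc : c ≠ 0) {x : ℝ}
    (hx : x ^ 2 = (b : ℝ) ^ 2 - a * c) (hbx : (b : ℝ) - x ≠ 0) (v : ℚ × ℚ) :
    (c : ℝ) * ((Teps a b c v).2 : ℝ) + ((Teps a b c v).1 : ℝ) * x
      = ((b : ℝ) + x) / ((b : ℝ) - x) * ((c : ℝ) * (v.2 : ℝ) + (v.1 : ℝ) * x) := by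
  have haR : (a : ℝ) ≠ 0 := by exact_mod_cast ha
  have hcR : (c : ℝ) ≠ 0 := by exact_mod_cast hc
  simp only [Teps]
  push_cast
  field_simp
  linear_combination (-(2 * (b : ℝ) * ((b : ℝ) * (v.1 : ℝ) + (c : ℝ) * (v.2 : ℝ)))) * hx

theorem Qform_Teps {a c : ℤ} (b : ℤ) (ha : a ≠ 0) (hc : c ≠ 0) (v : ℚ × ℚ) :
    Qform a b c (Teps a b c v) = Qform a b c v := by
  have haQ : (a : ℚ) ≠ 0 := by exact_mod_cast ha
  have hcQ : (c : ℚ) ≠ 0 := by exact_mod_cast hc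
  simp only [Qform, Teps]
  field_simp
  ring

theorem Real.sqrt_sq_sub_lt {b e : ℝ} (hb : 0 < b) (he : 0 < e) : √(b ^ 2 - e) < b :=
  (Real.sqrt_lt' hb).mpr (by linarith)

/-- `ε = (b+√D)/(b-√D)` is a totally positive unit of norm 1 and
multiplication by `ε` preserves the coset `Λ+𝐜` and the quadratic form `Q`. -/
theorem stmt10 (a b c p r s : ℤ) (ha : 0 < a) (hb : 0 < b) (hc : 0 < c) (hp : 0 < p)
    (hab : a ∣ b) (hcb : c ∣ b) (hpa : p ∣ (b / a + 1)) (hpc : p ∣ (b / c + 1))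
    (hD : 0 < b ^ 2 - a * c) (hs : (2 : ℤ) ∣ (s - (b / a + 1))) :
    (0 < ((b : ℝ) + Real.sqrt ((b : ℝ) ^ 2 - (a : ℝ) * (c : ℝ))) /
        ((b : ℝ) - Real.sqrt ((b : ℝ) ^ 2 - (a : ℝ) * (c : ℝ)))) ∧
    (0 < ((b : ℝ) - Real.sqrt ((b : ℝ) ^ 2 - (a : ℝ) * (c : ℝ))) /
        ((b : ℝ) + Real.sqrt ((b : ℝ) ^ 2 - (a : ℝ) * (c : ℝ)))) ∧
    (((b : ℝ) + Real.sqrt ((b : ℝ) ^ 2 - (a : ℝ) * (c : ℝ))) /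
        ((b : ℝ) - Real.sqrt ((b : ℝ) ^ 2 - (a : ℝ) * (c : ℝ))) *
      (((b : ℝ) - Real.sqrt ((b : ℝ) ^ 2 - (a : ℝ) * (c : ℝ))) /
        ((b : ℝ) + Real.sqrt ((b : ℝ) ^ 2 - (a : ℝ) * (c : ℝ)))) = 1) ∧
    (∀ v : ℚ × ℚ,
      (c : ℝ) * ((Teps a b c v).2 : ℝ) +
          ((Teps a b c v).1 : ℝ) * Real.sqrt ((b : ℝ) ^ 2 - (a : ℝ) * (c : ℝ)) =
        (((b : ℝ) + Real.sqrt ((b : ℝ) ^ 2 - (a : ℝ) * (c : ℝ))) /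
            ((b : ℝ) - Real.sqrt ((b : ℝ) ^ 2 - (a : ℝ) * (c : ℝ)))) *
          ((c : ℝ) * (v.2 : ℝ) + (v.1 : ℝ) * Real.sqrt ((b : ℝ) ^ 2 - (a : ℝ) * (c : ℝ)))) ∧
    Set.BijOn (Teps a b c)
      (cosetL b c ((r : ℚ) / (p : ℚ) +
        ((a : ℚ) * (c : ℚ) * (s : ℚ)) / (2 * ((b : ℚ) ^ 2 - (a : ℚ) * (c : ℚ)))))
      (cosetL b c ((r : ℚ) / (p : ℚ) +
        ((a : ℚ) * (c : ℚ) * (s : ℚ)) / (2 * ((b : ℚ) ^ 2 - (a : ℚ) * (c : ℚ))))) ∧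
    (∀ v : ℚ × ℚ, Qform a b c (Teps a b c v) = Qform a b c v) := by
  obtain ⟨j, hj⟩ := hab
  obtain ⟨k, hk⟩ := hcb
  have hja : b / a = j := by rw [hj]; exact Int.mul_ediv_cancel_left j ha.ne'
  have hkc : b / c = k := by rw [hk]; exact Int.mul_ediv_cancel_left k hc.ne'
  rw [hja] at hpa hs
  rw [hkc] at hpc
  obtain ⟨t, ht⟩ : p ∣ j * k - 1 := (dvd_sub (hpa.mul_right k) hpc).trans ⟨1, by ring⟩
  have hb2 : b ^ 2 = a * c * (j * k) := by linear_combination b * hk + c * k * hj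
  have hN := two_mul_sub_one_mul_shift_eq r s hp.ne' hD.ne' hb2 ht
  obtain ⟨u, hu⟩ := hs
  set x := √((b : ℝ) ^ 2 - a * c)
  have hxb : x < b := Real.sqrt_sq_sub_lt (by exact_mod_cast hb) (by exact_mod_cast mul_pos ha hc)
  have hminus : (0 : ℝ) < b - x := sub_pos.mpr hxb
  have hplus : (0 : ℝ) < b + x :=
    add_pos_of_pos_of_nonneg (by exact_mod_cast hb) (Real.sqrt_nonneg _)
  refine ⟨div_pos hplus hminus, div_pos hminus hplus, by field_simp, ?_, ?_,
    Qform_Teps b ha.ne' hc.ne'⟩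
  · exact Teps_embed_eq_mul ha.ne' hc.ne' (Real.sq_sqrt (by exact_mod_cast hD.le)) hminus.ne'
  · rw [Teps_eq_epsMap ha.ne' hc.ne' hj hk]
    exact epsMap_bijOn_cosetL hkc hN ⟨t * r + u, by linarith⟩
end

section
/- Let a,b,c,p be positive integers with a|b, c|b, p|(b/a+1), p|(b/c+1), D=b²−ac>0, let s₁,s₂ be odd integers and r ∈ ℤ, and set h = gcd(b/a+1, b/c+1) (so p | h). For odd integers t₁,t₂ define f_{t₁,t₂}(τ) = q^{p²ac(2bt₁t₂−at₁²−ct₂²)/(8D)} · Σ^{indef}_{(m,n)∈ℤ², m ≡ n (mod p)} (−1)^{(n−m)/p} · ζ_p^{rm} · exp( πiτ(2bmn + a(m²+mpt₁) + c(n²+npt₂)) ), where ζ_p = exp(2πi/p). Assume at least one of the following: (i) (s₁+s₂)/2 ∉ (h/p)ℤ; (ii) there are no integers k,l with r = (h+p)(2b+a+c)/(2hb) + (p/b)(ak+cl). Then there exist integers l₁, l₂ such that the function f_{s₁+2(h/p)l₁, s₂+2(h/p)l₂} is not identically zero on ℍ, i.e. there exists τ₀ ∈ ℍ with f_{s₁+2(h/p)l₁,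 s₂+2(h/p)l₂}(τ₀) ≠ 0. -/
/-- Summand `(-1)^{(n-m)/p} ζ_p^{rm} exp(πiτ(2bmn + a(m²+mpt₁) + c(n²+npt₂)))`,
where `ζ_p = exp(2πi/p)`. -/
noncomputable def zterm (a b c p r t₁ t₂ : ℤ) (τ : ℂ) (m n : ℤ) : ℂ :=
  (-1 : ℂ) ^ ((n - m) / p) *
    Complex.exp (2 * (Real.pi : ℂ) * Complex.I / (p : ℂ)) ^ (r * m) *
    Complex.exp ((Real.pi : ℂ) * Complex.I * τ *
      (2 * (b : ℂ) * (m : ℂ) * (n : ℂ) +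
        (a : ℂ) * ((m : ℂ) ^ 2 + (m : ℂ) * (p : ℂ) * (t₁ : ℂ)) +
        (c : ℂ) * ((n : ℂ) ^ 2 + (n : ℂ) * (p : ℂ) * (t₂ : ℂ))))

/-- The series `f_{t₁,t₂}` of Theorem `nonvan`:
`q^{p²ac(2bt₁t₂-at₁²-ct₂²)/(8D)} Σ^{indef}_{m≡n (p)} (-1)^{(n-m)/p} ζ_p^{rm}
  q^{bmn + a(m²+mpt₁)/2 + c(n²+npt₂)/2}`. -/
noncomputable def fnv (a b c p r t₁ t₂ : ℤ) (τ : ℂ) : ℂ :=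
  Complex.exp (2 * (Real.pi : ℂ) * Complex.I * τ *
      ((p : ℂ) ^ 2 * (a : ℂ) * (c : ℂ) *
          (2 * (b : ℂ) * (t₁ : ℂ) * (t₂ : ℂ) - (a : ℂ) * (t₁ : ℂ) ^ 2 - (c : ℂ) * (t₂ : ℂ) ^ 2) /
        (8 * ((b : ℂ) ^ 2 - (a : ℂ) * (c : ℂ))))) *
    ((∑' q : {q : ℤ × ℤ // 0 ≤ q.1 ∧ 0 ≤ q.2 ∧ p ∣ (q.1 - q.2)},
        zterm a b c p r t₁ t₂ τ q.1.1 q.1.2) -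
      ∑' q : {q : ℤ × ℤ // q.1 < 0 ∧ q.2 < 0 ∧ p ∣ (q.1 - q.2)},
        zterm a b c p r t₁ t₂ τ q.1.1 q.1.2)

/-!
On the imaginary axis `τ = i y` the term `(m, n)` of the indefinite theta series has modulus
`exp (-π y Q(m, n))`, where `Q = zexponent`. On the non-negative cone `Q ≥ m + n`, so the term
`(0, 0) = 1` dominates there; on the negative cone, as soon as `p a t₁ ≤ 2 (a + b)` and
`p c t₂ ≤ 2 (c + b)`, `Q` is strictly minimal at `(-1, -1)`, where the term is
`ζ_p^{-r} exp (-π y E)` with `E = 2b + a + c - p (a t₁ + c t₂)`. Hence, after renormalising,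
the series tends to the nonzero limit of `1 - ζ_p^{-r} exp (-π y E)` as `y → ∞`, unless
`E = 0` and `p ∣ r`.

Representatives `t_i ∈ [1, 2h/p]` of the prescribed classes satisfy the two inequalities. If they
give `E = 0` and `p ∣ r`, then `t₁` or `t₂` can still be raised by `2h/p` (which makes `E < 0`)
unless `b/a + 1 = b/c + 1 = h`; in that last case `a = c`, and `E = 0`, `p ∣ r` contradict
conditions (i) and (ii) respectively.
-/

open Complex Real Filter Topology

theorem summable_exp_neg_mul_abs {c : ℝ} (hc : 0 < c) :
    Summable fun n : ℤ => rexp (-(c * |(n : ℝ)|)) := by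
  have h := Real.summable_exp_nat_mul_iff.mpr (neg_neg_of_pos hc)
  apply Summable.of_nat_of_neg <;> simpa [mul_comm] using h

theorem summable_exp_neg_mul_abs_add_abs {c : ℝ} (hc : 0 < c) :
    Summable fun q : ℤ × ℤ => rexp (-(c * (|(q.1 : ℝ)| + |(q.2 : ℝ)|))) := by
  have h := summable_exp_neg_mul_abs hc
  refine (h.mul_of_nonneg h (fun _ => (exp_pos _).le) (fun _ => (exp_pos _).le)).congr fun q => ?_
  rw [← Real.exp_add]; ring_nf

theorem tendsto_exp_mul_tsum_sub_of_lt {ι : Type*} {f : ℝ → ι → ℂ} {Q : ι → ℤ} {N : ℤ} {c : ℝ}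
    (hc : 0 < c) (i₀ : ι) (hQ : ∀ i, i ≠ i₀ → N < Q i)
    (hs : Summable fun i => rexp (-(c * Q i))) (hf : ∀ y i, ‖f y i‖ ≤ rexp (-(c * y * Q i))) :
    Tendsto (fun y => (rexp (c * y * N) : ℂ) * (∑' i, f y i - f y i₀)) atTop (𝓝 0) := by
  classical
  set V := ∑' i, rexp (-(c * Q i))
  have hterm : ∀ y, 1 ≤ y → ∀ i, i ≠ i₀ →
      ‖f y i‖ ≤ rexp (-(c * (y - 1) * (N + 1))) * rexp (-(c * Q i)) := by
    intro y hy i hi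
    refine (hf y i).trans ?_
    rw [← Real.exp_add, Real.exp_le_exp]
    have hNQ : (N : ℝ) + 1 ≤ Q i := by exact_mod_cast hQ i hi
    nlinarith [mul_le_mul_of_nonneg_left hNQ (by nlinarith : 0 ≤ c * (y - 1))]
  have hbound : ∀ y, 1 ≤ y →
      ‖(rexp (c * y * N) : ℂ) * (∑' i, f y i - f y i₀)‖ ≤
        rexp (c * (N + 1)) * V * rexp (-(c * y)) := by
    intro y hy
    have hsum : Summable (f y) := (hs.mul_left _).of_norm_bounded_eventually
      ((eventually_cofinite_ne i₀).mono (hterm y hy))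
    rw [hsum.tsum_eq_add_tsum_ite i₀, add_sub_cancel_left, norm_mul, Complex.norm_real,
      Real.norm_of_nonneg (Real.exp_nonneg _)]
    have htail : ‖∑' i, if i = i₀ then 0 else f y i‖ ≤ rexp (-(c * (y - 1) * (N + 1))) * V :=
      tsum_of_norm_bounded (hs.hasSum.mul_left _) fun i => by
        split_ifs with hi
        · rw [norm_zero]; positivity
        · exact hterm y hy i hi
    calc rexp (c * y * N) * ‖∑' i, if i = i₀ then 0 else f y i‖
        ≤ rexp (c * y * N) * (rexp (-(c * (y - 1) * (N + 1))) * V) := by gcongr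
      _ = rexp (c * (N + 1)) * V * rexp (-(c * y)) := by
        rw [← mul_assoc, ← Real.exp_add,
          show c * y * N + -(c * (y - 1) * (N + 1)) = c * (N + 1) + -(c * y) by ring, Real.exp_add]
        ring
  refine squeeze_zero_norm' (eventually_atTop.2 ⟨1, hbound⟩) ?_
  simpa using (Real.tendsto_exp_neg_atTop_nhds_zero.comp
    (tendsto_id.const_mul_atTop hc)).const_mul (rexp (c * (N + 1)) * V)

theorem tendsto_ofReal_exp_pi_mul_of_neg {E : ℝ} (hE : E < 0) :
    Tendsto (fun y : ℝ => (rexp (π * y * E) : ℂ)) atTop (𝓝 0) := by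
  simpa using (tendsto_exp_atBot.comp
    ((tendsto_id.const_mul_atTop pi_pos).atTop_mul_const_of_neg hE)).ofReal

theorem exists_tendsto_exp_mul_one_sub {ζ : ℂ} (hζ : ζ ≠ 0) {E : ℤ} (hE : E = 0 → ζ ≠ 1) :
    ∃ (μ : ℤ) (L : ℂ), μ ≤ 0 ∧ μ ≤ E ∧ L ≠ 0 ∧
      Tendsto (fun y : ℝ => (rexp (π * y * μ) : ℂ) * (1 - ζ * rexp (-(π * y * E)))) atTop
        (𝓝 L) := by
  rcases lt_trichotomy E 0 with hE' | rfl | hE'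
  · refine ⟨E, -ζ, hE'.le, le_rfl, neg_ne_zero.2 hζ, ?_⟩
    have := (tendsto_ofReal_exp_pi_mul_of_neg (E := E) (by exact_mod_cast hE')).sub_const ζ
    refine (zero_sub ζ ▸ this).congr fun y => ?_
    rw [mul_sub, mul_one, mul_left_comm, ← ofReal_mul, ← Real.exp_add, add_neg_cancel,
      Real.exp_zero, ofReal_one, mul_one]
  · exact ⟨0, 1 - ζ, le_rfl, le_rfl, sub_ne_zero.2 (hE rfl).symm, by simp⟩
  · refine ⟨0, 1, le_rfl, hE'.le, one_ne_zero, ?_⟩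
    simpa using ((tendsto_ofReal_exp_pi_mul_of_neg (E := -E)
      (by exact_mod_cast neg_neg_of_pos hE')).const_mul ζ).const_sub 1

theorem norm_exp_two_pi_I_div_zpow (p n : ℤ) : ‖cexp (2 * π * I / p) ^ n‖ = 1 := by
  rw [norm_zpow, show 2 * π * I / p = ((2 * π / p : ℝ) : ℂ) * I by push_cast; ring,
    Complex.norm_exp_ofReal_mul_I, one_zpow]

theorem exp_two_pi_I_div_zpow_ne_one {p r : ℤ} (hp : 0 < p) (hr : ¬ p ∣ r) :
    cexp (2 * π * I / p) ^ r ≠ 1 := by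
  lift p to ℕ using hp.le
  have := (Complex.isPrimitiveRoot_exp p (by omega)).zpow_eq_one_iff_dvd r
  push_cast
  exact fun h => hr (this.1 h)

theorem abs_sub_sq_le_mul_sq_add_mul {a : ℤ} (ha : 1 ≤ a) (m s : ℤ) :
    |m| - (a * |s| + 1) ^ 2 ≤ a * (m ^ 2 + m * s) := by
  have hms : -(|m| * |s|) ≤ m * s := by rw [← abs_mul]; exact neg_abs_le _
  have hm2 : m ^ 2 = |m| ^ 2 := (sq_abs m).symm
  nlinarith [sq_nonneg (2 * |m| - (a * |s| + 1)), sq_nonneg (a * |s| + 1), abs_nonneg m,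
    abs_nonneg s, mul_le_mul_of_nonneg_left hms (by omega : 0 ≤ a),
    mul_nonneg (by omega : 0 ≤ a - 1) (sq_nonneg m)]

theorem le_mul_sq_add_mul {a m s : ℤ} (ha : 1 ≤ a) (hm : 0 ≤ m) (hs : 0 ≤ s) :
    m ≤ a * (m ^ 2 + m * s) := by
  nlinarith [Int.le_self_sq m, mul_nonneg (by omega : 0 ≤ a - 1) (sq_nonneg m),
    mul_nonneg (by omega : 0 ≤ a) (mul_nonneg hm hs)]

def zexponent (a b c p t₁ t₂ m n : ℤ) : ℤ :=
  2 * b * m * n + a * (m ^ 2 + m * p * t₁) + c * (n ^ 2 + n * p * t₂)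

noncomputable def indefSum (a b c p r t₁ t₂ : ℤ) (τ : ℂ) : ℂ :=
  (∑' q : {q : ℤ × ℤ // 0 ≤ q.1 ∧ 0 ≤ q.2 ∧ p ∣ (q.1 - q.2)},
      zterm a b c p r t₁ t₂ τ q.1.1 q.1.2) -
    ∑' q : {q : ℤ × ℤ // q.1 < 0 ∧ q.2 < 0 ∧ p ∣ (q.1 - q.2)},
      zterm a b c p r t₁ t₂ τ q.1.1 q.1.2

section

variable {a b c p r t₁ t₂ : ℤ}

theorem zterm_eq_mul_exp_zexponent (τ : ℂ) (m n : ℤ) : zterm a b c p r t₁ t₂ τ m n =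
    (-1 : ℂ) ^ ((n - m) / p) * cexp (2 * π * I / p) ^ (r * m) *
      cexp (π * I * τ * zexponent a b c p t₁ t₂ m n) := by
  simp only [zterm, zexponent]; push_cast; ring_nf

theorem norm_zterm_ofReal_mul_I (y : ℝ) (m n : ℤ) :
    ‖zterm a b c p r t₁ t₂ (y * I) m n‖ = rexp (-(π * y * zexponent a b c p t₁ t₂ m n)) := by
  rw [zterm_eq_mul_exp_zexponent, norm_mul, norm_mul, norm_exp_two_pi_I_div_zpow, norm_zpow,
    norm_neg, norm_one, one_zpow, one_mul, one_mul, Complex.norm_exp]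
  congr 1
  simp

theorem zterm_zero_zero (τ : ℂ) : zterm a b c p r t₁ t₂ τ 0 0 = 1 := by
  simp [zterm]

theorem zterm_neg_one_neg_one (y : ℝ) : zterm a b c p r t₁ t₂ (y * I) (-1) (-1) =
    cexp (2 * π * I / p) ^ (-r) * rexp (-(π * y * zexponent a b c p t₁ t₂ (-1) (-1))) := by
  rw [zterm_eq_mul_exp_zexponent]
  simp only [sub_self, Int.zero_ediv, zpow_zero, one_mul, mul_neg_one, ofReal_exp]
  congr 2
  push_cast
  ring_nf
  simp

theorem abs_add_abs_sub_le_zexponent (ha : 1 ≤ a) (hb : 0 ≤ b) (hc : 1 ≤ c) {m n : ℤ}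
    (hmn : 0 ≤ m * n) :
    |m| + |n| - ((a * |p * t₁| + 1) ^ 2 + (c * |p * t₂| + 1) ^ 2) ≤
      zexponent a b c p t₁ t₂ m n := by
  have h₁ := abs_sub_sq_le_mul_sq_add_mul ha m (p * t₁)
  have h₂ := abs_sub_sq_le_mul_sq_add_mul hc n (p * t₂)
  have h₃ : 0 ≤ 2 * b * m * n := by rw [mul_assoc _ m]; positivity
  simp only [zexponent, mul_assoc m] at *
  linarith

theorem add_le_zexponent (ha : 1 ≤ a) (hb : 0 ≤ b) (hc : 1 ≤ c) (h₁ : 0 ≤ p * t₁)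
    (h₂ : 0 ≤ p * t₂) {m n : ℤ} (hm : 0 ≤ m) (hn : 0 ≤ n) :
    m + n ≤ zexponent a b c p t₁ t₂ m n := by
  have h₁ := le_mul_sq_add_mul ha hm h₁
  have h₂ := le_mul_sq_add_mul hc hn h₂
  have h₃ : 0 ≤ 2 * b * m * n := by positivity
  simp only [zexponent, mul_assoc m] at *
  linarith

theorem zexponent_neg_one_lt (ha : 1 ≤ a) (hb : 0 ≤ b) (hc : 1 ≤ c) (h₁ : p * a * t₁ ≤ 2 * (a + b))
    (h₂ : p * c * t₂ ≤ 2 * (c + b)) {j k : ℤ} (hj : 1 ≤ j) (hk : 1 ≤ k) (hjk : (j, k) ≠ (1, 1)) :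
    zexponent a b c p t₁ t₂ (-1) (-1) < zexponent a b c p t₁ t₂ (-j) (-k) := by
  have key : zexponent a b c p t₁ t₂ (-j) (-k) - zexponent a b c p t₁ t₂ (-1) (-1) =
      2 * b * (j - 1) * (k - 1) + a * (j - 1) ^ 2 + c * (k - 1) ^ 2 +
        (j - 1) * (2 * (a + b) - p * a * t₁) + (k - 1) * (2 * (c + b) - p * c * t₂) := by
    simp only [zexponent]; ring
  have hpos : 0 < a * (j - 1) ^ 2 + c * (k - 1) ^ 2 := by
    rcases (by grind : 1 < j ∨ 1 < k) with h | h <;> positivity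
  have hj' : 0 ≤ j - 1 := by omega
  have hk' : 0 ≤ k - 1 := by omega
  nlinarith [mul_nonneg (mul_nonneg (by omega : 0 ≤ 2 * b) hj') hk',
    mul_nonneg hj' (by omega : 0 ≤ 2 * (a + b) - p * a * t₁),
    mul_nonneg hk' (by omega : 0 ≤ 2 * (c + b) - p * c * t₂)]

theorem summable_exp_zexponent (ha : 1 ≤ a) (hb : 0 ≤ b) (hc : 1 ≤ c) {P : ℤ × ℤ → Prop}
    (hP : ∀ q, P q → 0 ≤ q.1 * q.2) :
    Summable fun q : {q : ℤ × ℤ // P q} => rexp (-(π * zexponent a b c p t₁ t₂ q.1.1 q.1.2)) := by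
  set K : ℤ := (a * |p * t₁| + 1) ^ 2 + (c * |p * t₂| + 1) ^ 2
  refine (((summable_exp_neg_mul_abs_add_abs pi_pos).mul_left (rexp (π * K))).comp_injective
    Subtype.val_injective).of_nonneg_of_le (fun _ => (exp_pos _).le) fun q => ?_
  have hq : ((|q.1.1| + |q.1.2| - K : ℤ) : ℝ) ≤ zexponent a b c p t₁ t₂ q.1.1 q.1.2 := by
    exact_mod_cast abs_add_abs_sub_le_zexponent ha hb hc (hP q.1 q.2)
  push_cast at hq
  rw [Function.comp_apply, ← Real.exp_add, Real.exp_le_exp]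
  nlinarith [pi_pos]

theorem tendsto_exp_mul_indefSum_sub (ha : 1 ≤ a) (hb : 0 ≤ b) (hc : 1 ≤ c) (h₁ : 0 ≤ p * t₁)
    (h₂ : 0 ≤ p * t₂) {μ : ℤ} (hμ : μ ≤ 0)
    (hneg : ∀ j k, 1 ≤ j → 1 ≤ k → (j, k) ≠ (1, 1) → μ < zexponent a b c p t₁ t₂ (-j) (-k)) :
    Tendsto (fun y : ℝ => (rexp (π * y * μ) : ℂ) * (indefSum a b c p r t₁ t₂ (y * I) -
      (1 - cexp (2 * π * I / p) ^ (-r) * rexp (-(π * y * zexponent a b c p t₁ t₂ (-1) (-1))))))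
      atTop (𝓝 0) := by
  have hf : ∀ (y : ℝ) (m n : ℤ), ‖zterm a b c p r t₁ t₂ (y * I) m n‖ ≤
      rexp (-(π * y * zexponent a b c p t₁ t₂ m n)) :=
    fun y m n => (norm_zterm_ofReal_mul_I y m n).le
  have hsPos : Summable fun q : {q : ℤ × ℤ // 0 ≤ q.1 ∧ 0 ≤ q.2 ∧ p ∣ (q.1 - q.2)} =>
      rexp (-(π * zexponent a b c p t₁ t₂ q.1.1 q.1.2)) :=
    summable_exp_zexponent ha hb hc fun q hq => mul_nonneg hq.1 hq.2.1
  have hsNeg : Summable fun q : {q : ℤ × ℤ // q.1 < 0 ∧ q.2 < 0 ∧ p ∣ (q.1 - q.2)} =>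
      rexp (-(π * zexponent a b c p t₁ t₂ q.1.1 q.1.2)) :=
    summable_exp_zexponent ha hb hc fun q hq => mul_nonneg_of_nonpos_of_nonpos hq.1.le hq.2.1.le
  have hPos := tendsto_exp_mul_tsum_sub_of_lt (N := μ) pi_pos ⟨(0, 0), le_rfl, le_rfl, dvd_zero p⟩
    (fun ⟨(m, n), hm, hn, _⟩ hq => by
      have hmn : (m, n) ≠ (0, 0) := fun h => hq (Subtype.ext h)
      have := add_le_zexponent (m := m) (n := n) ha hb hc h₁ h₂ hm hn
      simp only [ne_eq, Prod.mk.injEq] at hmn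
      show μ < zexponent a b c p t₁ t₂ m n
      omega) hsPos (fun y q => hf y q.1.1 q.1.2)
  have hNeg := tendsto_exp_mul_tsum_sub_of_lt (N := μ) pi_pos
    ⟨(-1, -1), by norm_num, by norm_num, by simp⟩
    (fun ⟨(m, n), hm, hn, _⟩ hq => by
      have hmn : (m, n) ≠ (-1, -1) := fun h => hq (Subtype.ext h)
      simp only [ne_eq, Prod.mk.injEq] at hmn
      simpa using hneg (-m) (-n) (by omega) (by omega) (by simp only [ne_eq, Prod.mk.injEq]; omega))
    hsNeg (fun y q => hf y q.1.1 q.1.2)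
  refine (sub_self (0 : ℂ) ▸ hPos.sub hNeg).congr fun y => ?_
  simp only [indefSum, zterm_zero_zero, zterm_neg_one_neg_one]
  ring

theorem exists_fnv_ne_zero (ha : 0 < a) (hb : 0 ≤ b) (hc : 0 < c) (hp : 0 < p) (ht₁ : 0 ≤ t₁)
    (ht₂ : 0 ≤ t₂) (h₁ : p * a * t₁ ≤ 2 * (a + b)) (h₂ : p * c * t₂ ≤ 2 * (c + b))
    (hE : 2 * b + a + c ≠ p * (a * t₁ + c * t₂) ∨ ¬ p ∣ r) :
    ∃ τ₀ : ℂ, 0 < τ₀.im ∧ fnv a b c p r t₁ t₂ τ₀ ≠ 0 := by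
  have hEval : zexponent a b c p t₁ t₂ (-1) (-1) = 2 * b + a + c - p * (a * t₁ + c * t₂) := by
    simp only [zexponent]; ring
  obtain ⟨μ, L, hμ0, hμE, hL, hlead⟩ :=
    exists_tendsto_exp_mul_one_sub (E := zexponent a b c p t₁ t₂ (-1) (-1))
      (zpow_ne_zero (-r) (Complex.exp_ne_zero (2 * π * I / p)))
    fun hE0 => exp_two_pi_I_div_zpow_ne_one hp (by rw [dvd_neg]; exact hE.resolve_left (by omega))
  have hlim := (tendsto_exp_mul_indefSum_sub (r := r) (by omega) hb (by omega) (by positivity)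
    (by positivity) hμ0 fun j k hj hk hjk => hμE.trans_lt <|
      zexponent_neg_one_lt (by omega) hb (by omega) h₁ h₂ hj hk hjk).add hlead
  obtain ⟨y, hy, hy0⟩ :=
    ((hlim.eventually_ne (by rwa [zero_add])).and (eventually_gt_atTop 0)).exists
  refine ⟨y * I, by simpa using hy0, mul_ne_zero (Complex.exp_ne_zero _)
    fun (h : indefSum a b c p r t₁ t₂ (y * I) = 0) => hy ?_⟩
  rw [h]
  ring

end

theorem exists_add_mul_mem_Icc (s : ℤ) {d : ℤ} (hd : 0 < d) :
    ∃ l, 1 ≤ s + d * l ∧ s + d * l ≤ d := by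
  refine ⟨-((s - 1) / d), ?_⟩
  have := Int.emod_add_mul_ediv (s - 1) d
  have := Int.emod_nonneg (s - 1) hd.ne'
  have := Int.emod_lt_of_pos (s - 1) hd
  constructor <;> linarith

theorem two_mul_le_of_dvd_of_ne {h x : ℤ} (hx : 0 < x) (hd : h ∣ x) (hne : h ≠ x) : 2 * h ≤ x := by
  obtain ⟨k, rfl⟩ := hd
  rcases le_or_gt h 0 with hh | hh
  · linarith
  have hk : 0 < k := pos_of_mul_pos_right hx hh.le
  have hk2 : 2 ≤ k := by
    by_contra! hk2
    obtain rfl : k = 1 := by omega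
    simp at hne
  nlinarith

theorem mul_mul_le_two_mul_add {a b β p H t k : ℤ} (ha : 0 ≤ a) (hp : 0 ≤ p) (hβ : b = a * β)
    (ht : t ≤ 2 * H * k) (hk : p * H * k ≤ β + 1) : p * a * t ≤ 2 * (a + b) := by
  subst hβ
  have : p * t ≤ 2 * (β + 1) := by nlinarith [mul_le_mul_of_nonneg_left ht hp]
  nlinarith [mul_le_mul_of_nonneg_left this ha]

theorem half_add_eq_div_mul {s₁ s₂ p H h k : ℤ} (hp : p ≠ 0) (hpH : p * H = h)
    (hs : s₁ + s₂ = 2 * H * k) : ((s₁ : ℚ) + s₂) / 2 = (h : ℚ) / p * k := by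
  have hs' : (s₁ : ℚ) + s₂ = 2 * H * k := by exact_mod_cast hs
  rw [← hpH, hs']
  push_cast
  field_simp

theorem exists_eq_of_eq_mul_sub_one {a b c p r H h ρ : ℤ} (ha : a ≠ 0) (hh : h ≠ 0) (hh1 : h ≠ 1)
    (hpH : p * H = h) (hca : c = a) (hb : b = a * (h - 1)) (hr : r = p * ρ) :
    ∃ k l : ℤ, (r : ℚ) = ((h : ℚ) + (p : ℚ)) * (2 * (b : ℚ) + (a : ℚ) + (c : ℚ)) /
      (2 * (h : ℚ) * (b : ℚ)) + (p : ℚ) / (b : ℚ) * ((a : ℚ) * (k : ℚ) + (c : ℚ) * (l : ℚ)) := by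
  refine ⟨ρ * (h - 1) - H - 1, 0, ?_⟩
  rw [hca, hb, hr, ← hpH]
  rw [← hpH] at hh hh1
  have : (p : ℚ) * H - 1 ≠ 0 := by
    rw [sub_ne_zero]; exact_mod_cast hh1
  have : (p : ℚ) ≠ 0 := by exact_mod_cast left_ne_zero_of_mul hh
  have : (H : ℚ) ≠ 0 := by exact_mod_cast right_ne_zero_of_mul hh
  have : (a : ℚ) ≠ 0 := by exact_mod_cast ha
  push_cast
  field_simp
  ring

theorem exists_fnv_shift_ne_zero_or {a b c p r β γ H s₁ s₂ : ℤ} (ha : 0 < a) (hb : 0 < b)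
    (hc : 0 < c) (hp : 0 < p) (hH : 0 < H) (hβ : b = a * β) (hγ : b = c * γ)
    (hβH : p * H ∣ β + 1) (hγH : p * H ∣ γ + 1) :
    (∃ l₁ l₂ : ℤ, ∃ τ₀ : ℂ, 0 < τ₀.im ∧ fnv a b c p r (s₁ + 2 * H * l₁) (s₂ + 2 * H * l₂) τ₀ ≠ 0) ∨
      (c = a ∧ b = a * (p * H - 1) ∧ p ∣ r ∧ ∃ k, s₁ + s₂ = 2 * H * k) := by
  have hβ0 : 0 < β := pos_of_mul_pos_right (hβ ▸ hb) ha.le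
  have hγ0 : 0 < γ := pos_of_mul_pos_right (hγ ▸ hb) hc.le
  have hβH' := Int.le_of_dvd (by omega) hβH
  have hγH' := Int.le_of_dvd (by omega) hγH
  obtain ⟨l₁, hσ₁, hσ₁'⟩ := exists_add_mul_mem_Icc s₁ (by omega : 0 < 2 * H)
  obtain ⟨l₂, hσ₂, hσ₂'⟩ := exists_add_mul_mem_Icc s₂ (by omega : 0 < 2 * H)
  set σ₁ := s₁ + 2 * H * l₁
  set σ₂ := s₂ + 2 * H * l₂
  have hbd₁ : p * a * σ₁ ≤ 2 * (a + b) :=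
    mul_mul_le_two_mul_add ha.le hp.le hβ (H := H) (k := 1) (by linarith) (by linarith)
  have hbd₂ : p * c * σ₂ ≤ 2 * (c + b) :=
    mul_mul_le_two_mul_add hc.le hp.le hγ (H := H) (k := 1) (by linarith) (by linarith)
  by_cases hcase : 2 * b + a + c ≠ p * (a * σ₁ + c * σ₂) ∨ ¬ p ∣ r
  · exact .inl ⟨l₁, l₂, exists_fnv_ne_zero ha hb.le hc hp (by omega) (by omega) hbd₁ hbd₂ hcase⟩
  push Not at hcase
  obtain ⟨hE, hpr⟩ := hcase
  rcases hβH'.lt_or_eq with hβH' | hβH'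
  · refine .inl ⟨l₁ + 1, l₂, ?_⟩
    rw [show s₁ + 2 * H * (l₁ + 1) = σ₁ + 2 * H by ring]
    exact exists_fnv_ne_zero ha hb.le hc hp (by omega) (by omega)
      (mul_mul_le_two_mul_add ha.le hp.le hβ (H := H) (k := 2) (by linarith)
        (by linarith [two_mul_le_of_dvd_of_ne (by omega) hβH hβH'.ne])) hbd₂
      (.inl (by nlinarith [mul_pos (mul_pos hp ha) hH]))
  rcases hγH'.lt_or_eq with hγH' | hγH'
  · refine .inl ⟨l₁, l₂ + 1, ?_⟩
    rw [show s₂ + 2 * H * (l₂ + 1) = σ₂ + 2 * H by ring]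
    exact exists_fnv_ne_zero ha hb.le hc hp (by omega) (by omega) hbd₁
      (mul_mul_le_two_mul_add hc.le hp.le hγ (H := H) (k := 2) (by linarith)
        (by linarith [two_mul_le_of_dvd_of_ne (by omega) hγH hγH'.ne]))
      (.inl (by nlinarith [mul_pos (mul_pos hp hc) hH]))
  have hca : c = a := mul_right_cancel₀ hγ0.ne' (by rw [← hγ, hβ, (by omega : β = γ)])
  have hba : b = a * (p * H - 1) := by rw [hβ, hβH']; ring
  subst hca
  have hsum : σ₁ + σ₂ = 2 * H :=
    mul_left_cancel₀ (mul_pos hp hc).ne' (by rw [hba] at hE; linear_combination -hE)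
  exact .inr ⟨rfl, hba, hpr, 1 - l₁ - l₂, by linear_combination hsum⟩

theorem stmt11_general (a b c p s₁ s₂ r : ℤ) (ha : 0 < a) (hb : 0 < b) (hc : 0 < c) (hp : 0 < p)
    (hab : a ∣ b) (hcb : c ∣ b) (hpa : p ∣ (b / a + 1)) (hpc : p ∣ (b / c + 1))
    (h : ℤ) (hdef : h = Int.gcd (b / a + 1) (b / c + 1))
    (hyp : (¬∃ k : ℤ, ((s₁ : ℚ) + (s₂ : ℚ)) / 2 = (h : ℚ) / (p : ℚ) * (k : ℚ)) ∨
      (¬∃ k l : ℤ, (r : ℚ) =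
        ((h : ℚ) + (p : ℚ)) * (2 * (b : ℚ) + (a : ℚ) + (c : ℚ)) / (2 * (h : ℚ) * (b : ℚ)) +
          (p : ℚ) / (b : ℚ) * ((a : ℚ) * (k : ℚ) + (c : ℚ) * (l : ℚ)))) :
    ∃ l₁ l₂ : ℤ, ∃ τ₀ : ℂ, 0 < τ₀.im ∧
      fnv a b c p r (s₁ + 2 * (h / p) * l₁) (s₂ + 2 * (h / p) * l₂) τ₀ ≠ 0 := by
  obtain ⟨β, hβ⟩ := hab
  obtain ⟨γ, hγ⟩ := hcb
  have hba : b / a = β := by rw [hβ, Int.mul_ediv_cancel_left _ ha.ne']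
  have hbc : b / c = γ := by rw [hγ, Int.mul_ediv_cancel_left _ hc.ne']
  rw [hba, hbc] at hdef
  rw [hba] at hpa
  rw [hbc] at hpc
  have hh : 0 < h := hdef ▸ Int.natCast_pos.2 (Int.gcd_pos_of_ne_zero_left _ (by
    nlinarith [pos_of_mul_pos_right (hβ ▸ hb) ha.le]))
  obtain ⟨H, hH⟩ : p ∣ h := hdef ▸ Int.dvd_coe_gcd hpa hpc
  rw [hH, Int.mul_ediv_cancel_left _ hp.ne']
  refine (exists_fnv_shift_ne_zero_or ha hb hc hp (pos_of_mul_pos_right (hH ▸ hh) hp.le) hβ hγ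
    (hH ▸ hdef ▸ Int.gcd_dvd_left _ _) (hH ▸ hdef ▸ Int.gcd_dvd_right _ _)).resolve_right ?_
  rintro ⟨hca, hbH, ⟨ρ, hρ⟩, k, hk⟩
  rcases hyp with hyp | hyp
  · exact hyp ⟨k, half_add_eq_div_mul hp.ne' hH.symm hk⟩
  · exact hyp (exists_eq_of_eq_mul_sub_one ha.ne' hh.ne' (by nlinarith) hH.symm hca (hH ▸ hbH) hρ)

/-- Theorem `nonvan`: under either of the two arithmetic conditions on
`(s₁+s₂)/2` and `r`, some shift `f_{s₁+2(h/p)l₁, s₂+2(h/p)l₂}` is not identically zero,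
where `h = gcd(b/a+1, b/c+1)`. -/
theorem stmt11 (a b c p s₁ s₂ r : ℤ) (ha : 0 < a) (hb : 0 < b) (hc : 0 < c) (hp : 0 < p)
    (hab : a ∣ b) (hcb : c ∣ b) (hpa : p ∣ (b / a + 1)) (hpc : p ∣ (b / c + 1))
    (hD : 0 < b ^ 2 - a * c) (hs₁ : Odd s₁) (hs₂ : Odd s₂)
    (h : ℤ) (hdef : h = Int.gcd (b / a + 1) (b / c + 1))
    (hyp : (¬∃ k : ℤ, ((s₁ : ℚ) + (s₂ : ℚ)) / 2 = (h : ℚ) / (p : ℚ) * (k : ℚ)) ∨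
      (¬∃ k l : ℤ, (r : ℚ) =
        ((h : ℚ) + (p : ℚ)) * (2 * (b : ℚ) + (a : ℚ) + (c : ℚ)) / (2 * (h : ℚ) * (b : ℚ)) +
          (p : ℚ) / (b : ℚ) * ((a : ℚ) * (k : ℚ) + (c : ℚ) * (l : ℚ)))) :
    ∃ l₁ l₂ : ℤ, ∃ τ₀ : ℂ, 0 < τ₀.im ∧
      fnv a b c p r (s₁ + 2 * (h / p) * l₁) (s₂ + 2 * (h / p) * l₂) τ₀ ≠ 0 :=
  stmt11_general a b c p s₁ s₂ r ha hb hc hp hab hcb hpa hpc h hdef hyp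
end
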